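/- Let G ≤ D_n act on R = Π_{Ã_{n-1}}, and suppose the unique reflection τ ∈ D_n fixing vertex e_i does not lie in G. Then in the skew group algebra R#G, the ideal generated by f_G = Σ_{g∈G} 1#g contains p#1 for every path p of length at least 2n+1; consequently the quotient (R#G)/(f_G) is finite dimensional over k. -/

import Mathlib

open scoped BigOperators

/-- Generators of the path algebra of the double of the extended Dynkin quiver Ã_{n-1}:
vertex idempotents `vtx i`, nonstar arrows `arr i : e_i → e_{i+1}`,
star arrows `star i : e_{i+1} → e_i`. -/
inductive PPGen (n : ℕ) : Type
  | vtx (i : ZMod n)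
  | arr (i : ZMod n)
  | star (i : ZMod n)

variable (K : Type) [Field K] (n : ℕ) [NeZero n]

abbrev PPFree := FreeAlgebra K (PPGen n)

noncomputable def E (i : ZMod n) : PPFree K n := FreeAlgebra.ι K (PPGen.vtx i)
noncomputable def A (i : ZMod n) : PPFree K n := FreeAlgebra.ι K (PPGen.arr i)
noncomputable def S (i : ZMod n) : PPFree K n := FreeAlgebra.ι K (PPGen.star i)

/-- Defining relations of the preprojective algebra Π_{Ã_{n-1}}: the path-algebra
relations for the double quiver, together with the preprojective relation
Ω = Σ_i (α_i α_i* − α_i* α_i) = 0. -/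
inductive PPRel : PPFree K n → PPFree K n → Prop
  | vtx_mul (i j : ZMod n) :
      PPRel (E K n i * E K n j) (if i = j then E K n i else 0)
  | vtx_sum : PPRel (∑ i : ZMod n, E K n i) 1
  | arr_left (i : ZMod n) : PPRel (E K n i * A K n i) (A K n i)
  | arr_right (i : ZMod n) : PPRel (A K n i * E K n (i + 1)) (A K n i)
  | arr_left' (i j : ZMod n) : j ≠ i → PPRel (E K n j * A K n i) 0
  | arr_right' (i j : ZMod n) : j ≠ i + 1 → PPRel (A K n i * E K n j) 0
  | star_left (i : ZMod n) : PPRel (E K n (i + 1) * S K n i) (S K n i)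
  | star_right (i : ZMod n) : PPRel (S K n i * E K n i) (S K n i)
  | star_left' (i j : ZMod n) : j ≠ i + 1 → PPRel (E K n j * S K n i) 0
  | star_right' (i j : ZMod n) : j ≠ i → PPRel (S K n i * E K n j) 0
  | preproj :
      PPRel (∑ i : ZMod n, (A K n i * S K n i - S K n i * A K n i)) 0

/-- The preprojective algebra Π_{Ã_{n-1}}. -/
abbrev Preproj := RingQuot (PPRel K n)

/-- The canonical projection from the free algebra onto Π_{Ã_{n-1}}. -/
noncomputable def pp : PPFree K n →ₐ[K] Preproj K n := RingQuot.mkAlgHom K (PPRel K n)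

/-- `aPath i ℓ` is the pure nonstar path α_i α_{i+1} ⋯ α_{i+ℓ-1} (with `aPath i 0 = e_i`). -/
noncomputable def aPath (i : ZMod n) : ℕ → PPFree K n
  | 0 => E K n i
  | (ℓ + 1) => A K n i * aPath (i + 1) ℓ

/-- `sPath j m` is the pure star path α_{j-1}* α_{j-2}* ⋯ α_{j-m}* starting at vertex j
(with `sPath j 0 = e_j`). -/
noncomputable def sPath (j : ZMod n) : ℕ → PPFree K n
  | 0 => E K n j
  | (m + 1) => S K n (j - 1) * sPath (j - 1) m

/-- The canonical-form path with source e_i consisting of ℓ nonstar arrows followed by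
m star arrows, as an element of Π_{Ã_{n-1}}. -/
noncomputable def cpath (i : ZMod n) (ℓ m : ℕ) : Preproj K n :=
  pp K n (aPath K n i ℓ * sPath K n (i + (ℓ : ZMod n)) m)

/-- The orbit sum O(ℓ,m): the sum over all paths in B_{ℓ,m} = Q_ℓQ_m* ∪ Q_mQ_ℓ*. -/
noncomputable def OO (ℓ m : ℕ) : Preproj K n :=
  if ℓ = m then ∑ i : ZMod n, cpath K n i ℓ ℓ
  else ∑ i : ZMod n, (cpath K n i ℓ m + cpath K n i m ℓ)

/-- Source of an arrow of the double quiver of Ã_{n-1}: `(false, j)` is the nonstar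
arrow α_j : e_j → e_{j+1}, `(true, j)` is the star arrow α_j* : e_{j+1} → e_j. -/
def dsrc (n : ℕ) : Bool × ZMod n → ZMod n
  | (false, j) => j
  | (true, j) => j + 1

/-- Target of an arrow of the double quiver of Ã_{n-1}. -/
def dtgt (n : ℕ) : Bool × ZMod n → ZMod n
  | (false, j) => j + 1
  | (true, j) => j


/-- The ambient group in which quiver automorphisms of the double of Ã_{n-1} live:
pairs of a permutation of the vertices and a permutation of the arrows. -/
abbrev PairPerm := Equiv.Perm (ZMod n) × Equiv.Perm (Bool × ZMod n)

/-- The rotation ρ : e_i ↦ e_{i+1}, α_i ↦ α_{i+1}, α_i* ↦ α_{i+1}*. -/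
def rho : PairPerm n :=
  (Equiv.addRight (1 : ZMod n), (Equiv.refl Bool).prodCongr (Equiv.addRight (1 : ZMod n)))

/-- The reflection r : e_i ↦ e_{n-i}, α_i ↦ α_{n-i-1}*, α_i* ↦ α_{n-i-1}. -/
def reflD : PairPerm n :=
  (Function.Involutive.toPerm (fun j => -j) (fun j => by simp),
   Function.Involutive.toPerm (fun a => (!a.1, -a.2 - 1))
     (fun a => by cases a with | mk b j => simp))

/-- The dihedral group D_n = ⟨ρ, r⟩ of quiver automorphisms of the double of Ã_{n-1}. -/
def Dn : Subgroup (PairPerm n) := Subgroup.closure {rho n, reflD n}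

/-- The reflection τ_i through the vertex e_i: e_j ↦ e_{2i-j}, α_m ↦ α_{2i-m-1}*,
α_m* ↦ α_{2i-m-1}. -/
def tau (i : ZMod n) : PairPerm n :=
  (Function.Involutive.toPerm (fun j => 2 * i - j) (fun j => by simp),
   Function.Involutive.toPerm (fun a => (!a.1, 2 * i - a.2 - 1))
     (fun a => by
       cases a with
       | mk b j => simp only [Bool.not_not, Prod.mk.injEq]; exact ⟨trivial, by ring⟩))

/-- `isPathFrom n i w` : the word `w` of arrows of the double quiver is a path with
source vertex `e_i`. -/
def isPathFrom (i : ZMod n) : List (Bool × ZMod n) → Prop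
  | [] => True
  | a :: rest => dsrc n a = i ∧ isPathFrom (dtgt n a) rest

/-- `shape n ℓ m w` : the word `w` consists of exactly ℓ nonstar arrows followed by
m star arrows, i.e. `w ∈ Q_ℓ Q_m*`. -/
def shape (ℓ m : ℕ) (w : List (Bool × ZMod n)) : Prop :=
  w.map Prod.fst = List.replicate ℓ false ++ List.replicate m true

/-- The set B_{ℓ,m} = Q_ℓ Q_m* ∪ Q_m Q_ℓ* of canonical-form paths (recorded together
with their source vertex). -/
def Bset (ℓ m : ℕ) : Set (ZMod n × List (Bool × ZMod n)) :=
  {p | isPathFrom n p.1 p.2 ∧ (shape n ℓ m p.2 ∨ shape n m ℓ p.2)}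

/-- The action of a pair of permutations on a path-with-source. -/
def pact (g : PairPerm n) (p : ZMod n × List (Bool × ZMod n)) :
    ZMod n × List (Bool × ZMod n) :=
  (g.1 p.1, p.2.map g.2)

/-- An arrow of the double quiver: `(false, i)` is the nonstar arrow α_i,
`(true, i)` is the star arrow α_i*. -/
def arrGen (n : ℕ) : Bool × ZMod n → PPGen n
  | (false, i) => PPGen.arr i
  | (true, i) => PPGen.star i

/-- The product in the free path algebra of the arrows in a word. -/
noncomputable def wordProd (w : List (Bool × ZMod n)) : PPFree K n :=
  (w.map fun a => FreeAlgebra.ι K (arrGen n a)).prod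

/-- The action of a pair of permutations (a quiver automorphism of the double of
Ã_{n-1}) on the generators of the path algebra. -/
def actGen (g : PairPerm n) : PPGen n → PPGen n
  | PPGen.vtx i => PPGen.vtx (g.1 i)
  | PPGen.arr i => arrGen n (g.2 (false, i))
  | PPGen.star i => arrGen n (g.2 (true, i))

variable (G : Subgroup (PairPerm n))

/-- The free algebra on the generators of R = Π_{Ã_{n-1}} together with the elements
of the group G, used to present the skew group algebra R#G. -/
abbrev SkFree := FreeAlgebra K (PPGen n ⊕ ↥G)

noncomputable def dg (x : PPGen n) : SkFree K n G := FreeAlgebra.ι K (Sum.inl x)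
noncomputable def gg (g : ↥G) : SkFree K n G := FreeAlgebra.ι K (Sum.inr g)

/-- The embedding of the free path algebra into the free skew algebra. -/
noncomputable def embR : PPFree K n →ₐ[K] SkFree K n G :=
  FreeAlgebra.lift K fun x => FreeAlgebra.ι K (Sum.inl (α := PPGen n) x)

/-- Defining relations of the skew group algebra R#G: the relations of
R = Π_{Ã_{n-1}}, the group relations of G (g·h = gh, 1_G = 1), and the skew
commutation relations (1#g)(x#1) = (g(x)#1)(1#g). -/
inductive SkRel : SkFree K n G → SkFree K n G → Prop
  | base {a b : PPFree K n} : PPRel K n a b → SkRel (embR K n G a) (embR K n G b)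
  | grp_one : SkRel (gg K n G 1) 1
  | grp_mul (g h : ↥G) : SkRel (gg K n G g * gg K n G h) (gg K n G (g * h))
  | comm (g : ↥G) (x : PPGen n) :
      SkRel (gg K n G g * dg K n G x) (dg K n G (actGen n (↑g) x) * gg K n G g)

/-- The skew group algebra R#G. -/
abbrev SkAlg := RingQuot (SkRel K n G)

noncomputable def ppk : SkFree K n G →ₐ[K] SkAlg K n G := RingQuot.mkAlgHom K (SkRel K n G)

/-- The element f_G = Σ_{g ∈ G} 1#g of R#G. -/
noncomputable def fG : SkAlg K n G :=
  letI : Fintype ↥G := Fintype.ofFinite ↥G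
  ppk K n G (∑ g : ↥G, gg K n G g)

/-- The two-sided ideal of R#G generated by f_G (as the K-span of all a·f_G·b). -/
noncomputable def idealFG : Submodule K (SkAlg K n G) :=
  Submodule.span K {x : SkAlg K n G | ∃ a b : SkAlg K n G, x = a * fG K n G * b}


/-!
In `Π`, the relation `α_{j+1} α_{j+1}* = α_j* α_j` pushes star arrows to the right, so every
path of length `L` is either zero or a canonical path `α ⋯ α α* ⋯ α*` of length `L`, and the
canonical paths span `Π`. A canonical path of length at least `2n - 1` has `n` consecutive
arrows of one kind, so it passes through `e_i` and factors as `u e_i v`. In `R#G` the only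
elements of `D_n` fixing `e_i` are `1` and `τ ∉ G`, hence `e_i f_G e_i = e_i # 1` and
`u e_i v = (u e_i) f_G (e_i v)` lies in `(f_G)`. Finally `R#G` is spanned by the products
`p # g` with `p` canonical; those with `p` long lie in `(f_G)`, and the others are finitely many.
-/

section Preproj

variable {K n}

lemma pp_eq_of_rel {x y : PPFree K n} (h : PPRel K n x y) : pp K n x = pp K n y :=
  RingQuot.mkAlgHom_rel K h

lemma pp_mul_of_rel {x y z : PPFree K n} (h : PPRel K n (x * y) z) :
    pp K n x * pp K n y = pp K n z := by
  rw [← map_mul, pp_eq_of_rel h]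

lemma pp_E_mul_E (i j : ZMod n) :
    pp K n (E K n i) * pp K n (E K n j) = if i = j then pp K n (E K n i) else 0 := by
  rw [pp_mul_of_rel (.vtx_mul i j), apply_ite (pp K n), map_zero]

lemma pp_E_mul_A (j i : ZMod n) :
    pp K n (E K n j) * pp K n (A K n i) = if j = i then pp K n (A K n i) else 0 := by
  split_ifs with h
  · rw [h, pp_mul_of_rel (.arr_left i)]
  · rw [pp_mul_of_rel (.arr_left' i j h), map_zero]

lemma pp_A_mul_E (i j : ZMod n) :
    pp K n (A K n i) * pp K n (E K n j) = if j = i + 1 then pp K n (A K n i) else 0 := by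
  split_ifs with h
  · rw [h, pp_mul_of_rel (.arr_right i)]
  · rw [pp_mul_of_rel (.arr_right' i j h), map_zero]

lemma pp_E_mul_S (j i : ZMod n) :
    pp K n (E K n j) * pp K n (S K n i) = if j = i + 1 then pp K n (S K n i) else 0 := by
  split_ifs with h
  · rw [h, pp_mul_of_rel (.star_left i)]
  · rw [pp_mul_of_rel (.star_left' i j h), map_zero]

lemma pp_S_mul_E (i j : ZMod n) :
    pp K n (S K n i) * pp K n (E K n j) = if j = i then pp K n (S K n i) else 0 := by
  split_ifs with h
  · rw [h, pp_mul_of_rel (.star_right i)]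
  · rw [pp_mul_of_rel (.star_right' i j h), map_zero]

/-- The preprojective relation `Ω = 0` sandwiched between two copies of `e_{j+1}`. -/
lemma pp_A_mul_S (j : ZMod n) :
    pp K n (A K n (j + 1)) * pp K n (S K n (j + 1)) = pp K n (S K n j) * pp K n (A K n j) := by
  set e := pp K n (E K n (j + 1))
  have hAS : ∀ m, e * (pp K n (A K n m) * pp K n (S K n m)) * e
      = if j + 1 = m then pp K n (A K n m) * pp K n (S K n m) else 0 := by
    intro m
    rw [show e * (pp K n (A K n m) * pp K n (S K n m)) * e
      = (e * pp K n (A K n m)) * (pp K n (S K n m) * e) by simp only [mul_assoc],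
      pp_E_mul_A, pp_S_mul_E]
    split_ifs <;> simp
  have hSA : ∀ m, e * (pp K n (S K n m) * pp K n (A K n m)) * e
      = if j = m then pp K n (S K n m) * pp K n (A K n m) else 0 := by
    intro m
    rw [show e * (pp K n (S K n m) * pp K n (A K n m)) * e
      = (e * pp K n (S K n m)) * (pp K n (A K n m) * e) by simp only [mul_assoc],
      pp_E_mul_S, pp_A_mul_E]
    split_ifs <;> simp_all
  have hΩ := congrArg (fun x => e * x * e) (pp_eq_of_rel (PPRel.preproj (K := K) (n := n)))
  simp only [map_zero, mul_zero, zero_mul, map_sum, map_sub, map_mul, Finset.mul_sum,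
    Finset.sum_mul, mul_sub, sub_mul, Finset.sum_sub_distrib, hAS, hSA, Finset.sum_ite_eq,
    Finset.mem_univ, if_true] at hΩ
  exact sub_eq_zero.mp hΩ

end Preproj

section CanonicalPaths

variable {K n}

lemma pp_E_mul_aPath (i : ZMod n) (ℓ : ℕ) :
    pp K n (E K n i) * pp K n (aPath K n i ℓ) = pp K n (aPath K n i ℓ) := by
  cases ℓ with
  | zero => rw [aPath, pp_E_mul_E, if_pos rfl]
  | succ ℓ => rw [aPath, map_mul, ← mul_assoc, pp_E_mul_A, if_pos rfl]

lemma pp_E_mul_sPath (i : ZMod n) (m : ℕ) :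
    pp K n (E K n i) * pp K n (sPath K n i m) = pp K n (sPath K n i m) := by
  cases m with
  | zero => rw [sPath, pp_E_mul_E, if_pos rfl]
  | succ m => rw [sPath, map_mul, ← mul_assoc, pp_E_mul_S, if_pos (sub_add_cancel i 1).symm]

lemma pp_aPath_add (i : ZMod n) (k r : ℕ) :
    pp K n (aPath K n i (k + r)) = pp K n (aPath K n i k) * pp K n (aPath K n (i + k) r) := by
  induction k generalizing i with
  | zero => rw [zero_add, Nat.cast_zero, add_zero, aPath, pp_E_mul_aPath]
  | succ k ih =>
    rw [Nat.add_right_comm, aPath, aPath, map_mul, map_mul, ih, mul_assoc, Nat.cast_succ,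
      add_comm (k : ZMod n), add_assoc]

lemma pp_sPath_add (x : ZMod n) (k r : ℕ) :
    pp K n (sPath K n x (k + r)) = pp K n (sPath K n x k) * pp K n (sPath K n (x - k) r) := by
  induction k generalizing x with
  | zero => rw [zero_add, Nat.cast_zero, sub_zero, sPath, pp_E_mul_sPath]
  | succ k ih =>
    rw [Nat.add_right_comm, sPath, sPath, map_mul, map_mul, ih, mul_assoc, Nat.cast_succ,
      sub_sub, add_comm (k : ZMod n)]

lemma cpath_eq_mul (i : ZMod n) (ℓ m : ℕ) :
    cpath K n i ℓ m = pp K n (aPath K n i ℓ) * pp K n (sPath K n (i + ℓ) m) :=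
  map_mul _ _ _

lemma cpath_zero_left (i : ZMod n) (m : ℕ) : cpath K n i 0 m = pp K n (sPath K n i m) := by
  rw [cpath_eq_mul, Nat.cast_zero, add_zero, aPath, pp_E_mul_sPath]

lemma cpath_zero_zero (i : ZMod n) : cpath K n i 0 0 = pp K n (E K n i) :=
  cpath_zero_left i 0

lemma cpath_succ_left (i : ZMod n) (ℓ m : ℕ) :
    cpath K n i (ℓ + 1) m = pp K n (A K n i) * cpath K n (i + 1) ℓ m := by
  rw [cpath_eq_mul, cpath_eq_mul, aPath, map_mul, mul_assoc, Nat.cast_succ,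
    add_comm (ℓ : ZMod n), add_assoc]

lemma pp_E_mul_cpath_self (i : ZMod n) (ℓ m : ℕ) :
    pp K n (E K n i) * cpath K n i ℓ m = cpath K n i ℓ m := by
  rw [cpath_eq_mul, ← mul_assoc, pp_E_mul_aPath]

lemma pp_E_mul_cpath (t i : ZMod n) (ℓ m : ℕ) :
    pp K n (E K n t) * cpath K n i ℓ m = if t = i then cpath K n i ℓ m else 0 := by
  rw [← pp_E_mul_cpath_self i, ← mul_assoc, pp_E_mul_E]
  split_ifs with h
  · rw [h]
  · rw [zero_mul]

lemma pp_S_mul_cpath_self (i : ZMod n) (ℓ m : ℕ) :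
    pp K n (S K n i) * cpath K n i ℓ m = cpath K n (i + 1) ℓ (m + 1) := by
  induction ℓ generalizing i with
  | zero =>
    rw [cpath_zero_left, cpath_zero_left, sPath, add_sub_cancel_right, map_mul]
  | succ ℓ ih =>
    rw [cpath_succ_left, ← mul_assoc, ← pp_A_mul_S, mul_assoc, ih, cpath_succ_left]

lemma pp_A_mul_cpath (j i : ZMod n) (ℓ m : ℕ) :
    pp K n (A K n j) * cpath K n i ℓ m = if i = j + 1 then cpath K n j (ℓ + 1) m else 0 := by
  rw [← pp_E_mul_cpath_self i, ← mul_assoc, pp_A_mul_E]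
  split_ifs with h
  · rw [h, cpath_succ_left]
  · rw [zero_mul]

lemma pp_S_mul_cpath (j i : ZMod n) (ℓ m : ℕ) :
    pp K n (S K n j) * cpath K n i ℓ m = if i = j then cpath K n (j + 1) ℓ (m + 1) else 0 := by
  rw [← pp_E_mul_cpath_self i, ← mul_assoc, pp_S_mul_E]
  split_ifs with h
  · rw [h, pp_S_mul_cpath_self]
  · rw [zero_mul]

lemma cpath_eq_mul_E_mul (i j : ZMod n) {ℓ m : ℕ} (h : n ≤ ℓ ∨ n ≤ m) :
    ∃ u v, cpath K n j ℓ m = u * pp K n (E K n i) * v := by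
  rcases h with hℓ | hm
  · obtain ⟨r, rfl⟩ := Nat.exists_eq_add_of_le ((ZMod.val_lt (i - j)).le.trans hℓ)
    refine ⟨pp K n (aPath K n j (i - j).val),
      pp K n (aPath K n i r) * pp K n (sPath K n (j + ↑((i - j).val + r)) m), ?_⟩
    rw [cpath_eq_mul, pp_aPath_add, ZMod.natCast_zmod_val, add_sub_cancel, mul_assoc,
      mul_assoc, ← mul_assoc (pp K n (E K n i)), pp_E_mul_aPath]
  · set x := j + (ℓ : ZMod n)
    obtain ⟨r, rfl⟩ := Nat.exists_eq_add_of_le ((ZMod.val_lt (x - i)).le.trans hm)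
    refine ⟨pp K n (aPath K n j ℓ) * pp K n (sPath K n x (x - i).val),
      pp K n (sPath K n i r), ?_⟩
    rw [cpath_eq_mul, pp_sPath_add, ZMod.natCast_zmod_val, sub_sub_cancel, mul_assoc,
      mul_assoc, pp_E_mul_sPath]

end CanonicalPaths

section LongPaths

noncomputable def longPaths (N : ℕ) : Submodule K (Preproj K n) :=
  Submodule.span K {x | ∃ i ℓ m, N ≤ ℓ + m ∧ cpath K n i ℓ m = x}

variable {K n}

lemma cpath_mem_longPaths {N ℓ m : ℕ} (i : ZMod n) (h : N ≤ ℓ + m) :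
    cpath K n i ℓ m ∈ longPaths K n N :=
  Submodule.subset_span ⟨i, ℓ, m, h, rfl⟩

lemma longPaths_antitone : Antitone (longPaths K n) :=
  fun _ _ hNN' =>
    Submodule.span_mono fun _ ⟨i, ℓ, m, h, hx⟩ => ⟨i, ℓ, m, hNN'.trans h, hx⟩

lemma one_mem_longPaths_zero : (1 : Preproj K n) ∈ longPaths K n 0 := by
  rw [← map_one (pp K n), ← pp_eq_of_rel PPRel.vtx_sum, map_sum]
  exact Submodule.sum_mem _ fun t _ => cpath_zero_zero (K := K) t ▸ cpath_mem_longPaths t le_rfl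

lemma mul_mem_longPaths {c y : Preproj K n} {N N' : ℕ}
    (hc : ∀ i ℓ m, N ≤ ℓ + m → c * cpath K n i ℓ m ∈ longPaths K n N')
    (hy : y ∈ longPaths K n N) : c * y ∈ longPaths K n N' := by
  refine (Submodule.span_le (p := (longPaths K n N').comap (LinearMap.mulLeft K c))).mpr ?_ hy
  rintro _ ⟨i, ℓ, m, h, rfl⟩
  exact hc i ℓ m h

lemma pp_E_mul_mem_longPaths {y : Preproj K n} {N : ℕ} (t : ZMod n)
    (hy : y ∈ longPaths K n N) : pp K n (E K n t) * y ∈ longPaths K n N := by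
  refine mul_mem_longPaths (fun i ℓ m h => ?_) hy
  rw [pp_E_mul_cpath]
  split_ifs
  · exact cpath_mem_longPaths i h
  · exact zero_mem _

lemma pp_arrow_mul_mem_longPaths {y : Preproj K n} {N : ℕ} (a : Bool × ZMod n)
    (hy : y ∈ longPaths K n N) :
    pp K n (FreeAlgebra.ι K (arrGen n a)) * y ∈ longPaths K n (N + 1) := by
  refine mul_mem_longPaths (fun i ℓ m h => ?_) hy
  obtain ⟨_ | _, j⟩ := a
  · change pp K n (A K n j) * _ ∈ _
    rw [pp_A_mul_cpath]
    split_ifs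
    · exact cpath_mem_longPaths j (by omega)
    · exact zero_mem _
  · change pp K n (S K n j) * _ ∈ _
    rw [pp_S_mul_cpath]
    split_ifs
    · exact cpath_mem_longPaths (j + 1) (by omega)
    · exact zero_mem _

lemma pp_wordProd_mem_longPaths (w : List (Bool × ZMod n)) :
    pp K n (wordProd K n w) ∈ longPaths K n w.length := by
  induction w with
  | nil => exact (map_one (pp K n)) ▸ one_mem_longPaths_zero
  | cons a w ih =>
    rw [wordProd, List.map_cons, List.prod_cons, map_mul]
    exact pp_arrow_mul_mem_longPaths a ih

lemma longPaths_zero_eq_top : longPaths K n 0 = ⊤ := by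
  refine Submodule.eq_top_iff'.mpr fun x => ?_
  obtain ⟨z, rfl⟩ := RingQuot.mkAlgHom_surjective K (PPRel K n) x
  suffices ∀ y ∈ longPaths K n 0, pp K n z * y ∈ longPaths K n 0 from
    mul_one (pp K n z) ▸ this 1 one_mem_longPaths_zero
  induction z using FreeAlgebra.induction with
  | grade0 r =>
    intro y hy
    rw [AlgHom.commutes, ← Algebra.smul_def]
    exact Submodule.smul_mem _ r hy
  | grade1 x =>
    intro y hy
    cases x with
    | vtx t => exact pp_E_mul_mem_longPaths t hy
    | arr j => exact longPaths_antitone (Nat.zero_le 1) (pp_arrow_mul_mem_longPaths (false, j) hy)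
    | star j => exact longPaths_antitone (Nat.zero_le 1) (pp_arrow_mul_mem_longPaths (true, j) hy)
  | mul a b ha hb =>
    intro y hy
    rw [map_mul, mul_assoc]
    exact ha _ (hb y hy)
  | add a b ha hb =>
    intro y hy
    rw [map_add, add_mul]
    exact add_mem (ha y hy) (hb y hy)

end LongPaths

section Dihedral

variable {m : ℕ}

def rotationPerm (a : ZMod m) : PairPerm m :=
  (Equiv.addRight a, (Equiv.refl Bool).prodCongr (Equiv.addRight a))

def reflectionPerm (a : ZMod m) : PairPerm m :=
  (Function.Involutive.toPerm (fun j => a - j) (fun j => by simp),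
   Function.Involutive.toPerm (fun p => (!p.1, a - p.2 - 1))
     (fun p => Prod.ext (Bool.not_not _) (by ring)))

lemma rotationPerm_zero : rotationPerm (0 : ZMod m) = 1 := by
  ext <;> simp [rotationPerm]

lemma rotationPerm_mul_rotationPerm (a b : ZMod m) :
    rotationPerm a * rotationPerm b = rotationPerm (b + a) := by
  ext <;> simp [rotationPerm, add_assoc]

lemma rotationPerm_mul_reflectionPerm (a b : ZMod m) :
    rotationPerm a * reflectionPerm b = reflectionPerm (b + a) := by
  ext <;> simp [rotationPerm, reflectionPerm, Function.Involutive.toPerm] <;> ring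

lemma reflectionPerm_mul_rotationPerm (a b : ZMod m) :
    reflectionPerm b * rotationPerm a = reflectionPerm (b - a) := by
  ext <;> simp [rotationPerm, reflectionPerm, Function.Involutive.toPerm] <;> ring

lemma reflectionPerm_mul_reflectionPerm (a b : ZMod m) :
    reflectionPerm a * reflectionPerm b = rotationPerm (a - b) := by
  ext <;> simp [rotationPerm, reflectionPerm, Function.Involutive.toPerm] <;> ring

def dihedralPerms : Subgroup (PairPerm m) where
  carrier := {g | (∃ a, g = rotationPerm a) ∨ (∃ a, g = reflectionPerm a)}
  one_mem' := Or.inl ⟨0, rotationPerm_zero.symm⟩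
  mul_mem' := by
    rintro _ _ (⟨a, rfl⟩ | ⟨a, rfl⟩) (⟨b, rfl⟩ | ⟨b, rfl⟩)
    · exact Or.inl ⟨b + a, rotationPerm_mul_rotationPerm a b⟩
    · exact Or.inr ⟨b + a, rotationPerm_mul_reflectionPerm a b⟩
    · exact Or.inr ⟨a - b, reflectionPerm_mul_rotationPerm b a⟩
    · exact Or.inl ⟨a - b, reflectionPerm_mul_reflectionPerm a b⟩
  inv_mem' := by
    rintro _ (⟨a, rfl⟩ | ⟨a, rfl⟩)
    · refine Or.inl ⟨-a, inv_eq_of_mul_eq_one_right ?_⟩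
      rw [rotationPerm_mul_rotationPerm, neg_add_cancel, rotationPerm_zero]
    · refine Or.inr ⟨a, inv_eq_of_mul_eq_one_right ?_⟩
      rw [reflectionPerm_mul_reflectionPerm, sub_self, rotationPerm_zero]

lemma Dn_le_dihedralPerms : Dn m ≤ dihedralPerms := by
  rw [Dn, Subgroup.closure_le]
  rintro g (rfl | rfl)
  · exact Or.inl ⟨1, rfl⟩
  · refine Or.inr ⟨0, ?_⟩
    ext <;> simp [reflD, reflectionPerm, Function.Involutive.toPerm]

lemma eq_one_or_eq_tau_of_apply_eq_self {g : PairPerm m} (hg : g ∈ Dn m) {i : ZMod m}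
    (hi : g.1 i = i) : g = 1 ∨ g = tau m i := by
  rcases Dn_le_dihedralPerms hg with ⟨a, rfl⟩ | ⟨a, rfl⟩
  · left
    rw [show a = 0 from add_eq_left.mp hi, rotationPerm_zero]
  · right
    change a - i = i at hi
    rw [show a = 2 * i by linear_combination hi]
    rfl

end Dihedral

section Skew

noncomputable def preprojToSkew : Preproj K n →ₐ[K] SkAlg K n G :=
  RingQuot.liftAlgHom K
    ⟨(ppk K n G).comp (embR K n G), fun _ _ h => RingQuot.mkAlgHom_rel K (SkRel.base h)⟩

noncomputable def actFree (g : PairPerm n) : PPFree K n →ₐ[K] PPFree K n :=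
  FreeAlgebra.lift K (FreeAlgebra.ι K ∘ actGen n g)

variable {K n G}

lemma preprojToSkew_pp (x : PPFree K n) :
    preprojToSkew K n G (pp K n x) = ppk K n G (embR K n G x) :=
  RingQuot.liftAlgHom_mkAlgHom_apply _ _ _ _

lemma ppk_eq_of_rel {x y : SkFree K n G} (h : SkRel K n G x y) : ppk K n G x = ppk K n G y :=
  RingQuot.mkAlgHom_rel K h

lemma ppk_gg_one : ppk K n G (gg K n G 1) = 1 := by
  rw [ppk_eq_of_rel SkRel.grp_one, map_one]

lemma ppk_gg_mul_embR (g : G) (z : PPFree K n) :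
    ppk K n G (gg K n G g) * ppk K n G (embR K n G z)
      = ppk K n G (embR K n G (actFree K n g z)) * ppk K n G (gg K n G g) := by
  induction z using FreeAlgebra.induction with
  | grade0 r => simp only [AlgHom.commutes, Algebra.commutes]
  | grade1 x =>
    rw [actFree, FreeAlgebra.lift_ι_apply, Function.comp_apply, embR, FreeAlgebra.lift_ι_apply,
      FreeAlgebra.lift_ι_apply, ← map_mul, ← map_mul]
    exact ppk_eq_of_rel (SkRel.comm g x)
  | mul a b ha hb =>
    simp only [map_mul]
    rw [← mul_assoc, ha, mul_assoc, hb, mul_assoc]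
  | add a b ha hb => simp only [map_add, mul_add, add_mul, ha, hb]

lemma ppk_gg_mul_preprojToSkew_E (g : G) (j : ZMod n) :
    ppk K n G (gg K n G g) * preprojToSkew K n G (pp K n (E K n j))
      = preprojToSkew K n G (pp K n (E K n ((g : PairPerm n).1 j))) * ppk K n G (gg K n G g) := by
  rw [preprojToSkew_pp, preprojToSkew_pp, ppk_gg_mul_embR, E, actFree, FreeAlgebra.lift_ι_apply]
  rfl

lemma preprojToSkew_E_mul_fG_mul_E (hG : G ≤ Dn n) {i : ZMod n} (hτ : tau n i ∉ G) :
    preprojToSkew K n G (pp K n (E K n i)) * fG K n G * preprojToSkew K n G (pp K n (E K n i))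
      = preprojToSkew K n G (pp K n (E K n i)) := by
  let _ : Fintype G := Fintype.ofFinite G
  have hfix : ∀ g : G, (g : PairPerm n).1 i = i → g = 1 := fun g hg =>
    Subtype.ext ((eq_one_or_eq_tau_of_apply_eq_self (hG g.2) hg).resolve_right
      fun h => hτ (h ▸ g.2))
  have hterm : ∀ g : G, preprojToSkew K n G (pp K n (E K n i)) * ppk K n G (gg K n G g)
      * preprojToSkew K n G (pp K n (E K n i))
      = if g = 1 then preprojToSkew K n G (pp K n (E K n i)) else 0 := by
    intro g
    rw [mul_assoc, ppk_gg_mul_preprojToSkew_E, ← mul_assoc, ← map_mul, pp_E_mul_E]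
    split_ifs with hi hg hg
    · rw [hg, ppk_gg_one, mul_one]
    · exact absurd (hfix g hi.symm) hg
    · exact absurd (hg ▸ rfl : (g : PairPerm n).1 i = i).symm hi
    · rw [map_zero, zero_mul]
  rw [fG, map_sum, Finset.mul_sum, Finset.sum_mul, Finset.sum_congr rfl fun g _ => hterm g,
    Finset.sum_ite_eq' Finset.univ (1 : G), if_pos (Finset.mem_univ _)]

lemma preprojToSkew_mul_mem_idealFG (hG : G ≤ Dn n) {i : ZMod n} (hτ : tau n i ∉ G)
    {N : ℕ} (hN : 2 * n ≤ N + 1) {x : Preproj K n} (hx : x ∈ longPaths K n N)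
    (c : SkAlg K n G) : preprojToSkew K n G x * c ∈ idealFG K n G := by
  refine (Submodule.span_le (p := (idealFG K n G).comap
    ((LinearMap.mulRight K c).comp (preprojToSkew K n G).toLinearMap))).mpr ?_ hx
  rintro _ ⟨j, ℓ, m, h, rfl⟩
  obtain ⟨u, v, huv⟩ := cpath_eq_mul_E_mul i j (K := K) (by omega : n ≤ ℓ ∨ n ≤ m)
  have hE := preprojToSkew_E_mul_fG_mul_E (K := K) hG hτ
  set e := preprojToSkew K n G (pp K n (E K n i))
  refine Submodule.subset_span ⟨preprojToSkew K n G u * e, e * preprojToSkew K n G v * c, ?_⟩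
  change preprojToSkew K n G (cpath K n j ℓ m) * c = _
  calc preprojToSkew K n G (cpath K n j ℓ m) * c
      = preprojToSkew K n G u * (e * fG K n G * e) * preprojToSkew K n G v * c := by
        rw [hE, huv, map_mul, map_mul]
    _ = _ := by simp only [mul_assoc]

lemma mem_span_monomials (x : SkAlg K n G) :
    x ∈ Submodule.span K
      {y | ∃ z g, ppk K n G (embR K n G z) * ppk K n G (gg K n G g) = y} := by
  set M := {y | ∃ z g, ppk K n G (embR K n G z) * ppk K n G (gg K n G g) = y}
  have hmul : ∀ a ∈ M, ∀ b ∈ M, a * b ∈ M := by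
    rintro _ ⟨z, g, rfl⟩ _ ⟨z', g', rfl⟩
    refine ⟨z * actFree K n g z', g * g', ?_⟩
    simp only [map_mul, ← ppk_eq_of_rel (SkRel.grp_mul g g'), mul_assoc]
    rw [← mul_assoc (ppk K n G (gg K n G g)), ppk_gg_mul_embR, mul_assoc]
  have hone : 1 ∈ M := ⟨1, 1, by rw [map_one, map_one, one_mul, ppk_gg_one]⟩
  obtain ⟨z, rfl⟩ := RingQuot.mkAlgHom_surjective K (SkRel K n G) x
  induction z using FreeAlgebra.induction with
  | grade0 r =>
    rw [AlgHom.commutes, Algebra.algebraMap_eq_smul_one]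
    exact Submodule.smul_mem _ r (Submodule.subset_span hone)
  | grade1 x =>
    refine Submodule.subset_span ?_
    cases x with
    | inl p =>
      refine ⟨FreeAlgebra.ι K p, 1, ?_⟩
      rw [ppk_gg_one, mul_one, embR, FreeAlgebra.lift_ι_apply]
      rfl
    | inr g => exact ⟨1, g, by rw [map_one, map_one, one_mul]; rfl⟩
  | mul a b ha hb =>
    rw [map_mul]
    have hab := Submodule.mul_mem_mul ha hb
    rw [Submodule.span_mul_span] at hab
    exact Submodule.span_mono (Set.mul_subset_iff.mpr hmul) hab
  | add a b ha hb =>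
    rw [map_add]
    exact add_mem ha hb

lemma exists_finset_sub_mem_idealFG (hG : G ≤ Dn n) {i : ZMod n} (hτ : tau n i ∉ G) :
    ∃ s : Finset (SkAlg K n G), ∀ x : SkAlg K n G,
      ∃ y ∈ Submodule.span K (s : Set (SkAlg K n G)), x - y ∈ idealFG K n G := by
  set T := Set.range fun p : ZMod n × Fin (2 * n + 1) × Fin (2 * n + 1) × G =>
    preprojToSkew K n G (cpath K n p.1 p.2.1 p.2.2.1) * ppk K n G (gg K n G p.2.2.2)
  have hT : T.Finite := Set.finite_range _
  suffices ∀ x, x ∈ Submodule.span K T ⊔ idealFG K n G by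
    refine ⟨hT.toFinset, fun x => ?_⟩
    obtain ⟨y, hy, z, hz, rfl⟩ := Submodule.mem_sup.mp (this x)
    exact ⟨y, by rwa [hT.coe_toFinset], by rwa [add_sub_cancel_left]⟩
  have hpath : ∀ y ∈ longPaths K n 0, ∀ g : G,
      preprojToSkew K n G y * ppk K n G (gg K n G g) ∈ Submodule.span K T ⊔ idealFG K n G := by
    intro y hy g
    refine (Submodule.span_le (p := (Submodule.span K T ⊔ idealFG K n G).comap
      ((LinearMap.mulRight K (ppk K n G (gg K n G g))).comp
        (preprojToSkew K n G).toLinearMap))).mpr ?_ hy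
    rintro _ ⟨j, ℓ, m, -, rfl⟩
    by_cases hlong : 2 * n + 1 ≤ ℓ + m
    · exact Submodule.mem_sup_right (preprojToSkew_mul_mem_idealFG hG hτ (by omega)
        (cpath_mem_longPaths j hlong) _)
    · exact Submodule.mem_sup_left (Submodule.subset_span
        ⟨(j, ⟨ℓ, by omega⟩, ⟨m, by omega⟩, g), rfl⟩)
  intro x
  refine Submodule.span_le.mpr ?_ (mem_span_monomials x)
  rintro _ ⟨z, g, rfl⟩
  rw [← preprojToSkew_pp]
  exact hpath _ (by rw [longPaths_zero_eq_top]; exact Submodule.mem_top) g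

end Skew

theorem statement19 (hG : G ≤ Dn n) (i : ZMod n) (hτ : tau n i ∉ G) :
    (∀ w : List (Bool × ZMod n), 2 * n + 1 ≤ w.length →
      ppk K n G (embR K n G (wordProd K n w)) ∈ idealFG K n G) ∧
    (∃ s : Finset (SkAlg K n G), ∀ x : SkAlg K n G,
      ∃ y ∈ Submodule.span K (↑s : Set (SkAlg K n G)), x - y ∈ idealFG K n G) := by
  refine ⟨fun w hw => ?_, exists_finset_sub_mem_idealFG hG hτ⟩
  have h := preprojToSkew_mul_mem_idealFG hG hτ (by omega)
    (pp_wordProd_mem_longPaths (K := K) w) 1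
  rwa [mul_one, preprojToSkew_pp] at h
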